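/- Let X and Y be independent random variables, X exponentially distributed with mean λ_sr > 0 and Y exponentially distributed with mean λ_rd > 0, let â > 0, b̂ > 0, Ψ ≥ 1, and set γ_eq = â·b̂·X²·Y / (b̂·X·Y + â + Ψ) and μ_n = E[γ_eq^n]. Then for every real s with |s| < 1/(â·λ_sr), the series ∑_{n=0}^∞ ((−1)^n / n!) · μ_n · s^n converges absolutely and its sum equals the MGF value E[ e^{−s·γ_eq} ]. -/

import Mathlib

open MeasureTheory ProbabilityTheory Real Set
open scoped Nat

/-!
Writing `γ_eq = â X · b X Y / (b X Y + â + Ψ)` shows `0 ≤ γ_eq ≤ â X`, so `E[|γ_eq|^n] ≤ âⁿ E[Xⁿ] = n! (â λ_sr)ⁿ`.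
The moment series is therefore dominated by the geometric series `∑ (â λ_sr |s|)ⁿ`, which
justifies exchanging the expectation with the exponential series of `e^{-s γ_eq}`.
-/

namespace ProbabilityTheory

lemma integral_expMeasure {r : ℝ} (hr : 0 < r) (f : ℝ → ℝ) :
    ∫ x, f x ∂expMeasure r = ∫ x in Ioi 0, r * exp (-(r * x)) * f x := by
  rw [expMeasure, gammaMeasure, integral_withDensity_eq_integral_toReal_smul
    (f := gammaPDF 1 r) (measurable_gammaPDFReal 1 r).ennreal_ofReal
    (ae_of_all _ fun _ => ENNReal.ofReal_lt_top),
    ← integral_Ici_eq_integral_Ioi, ← integral_indicator measurableSet_Ici]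
  congr 1
  ext x
  by_cases hx : 0 ≤ x
  · simp [hx, gammaPDF_of_nonneg, ENNReal.toReal_ofReal, hr.le, exp_nonneg]
  · simp [hx, gammaPDF_of_neg (not_le.1 hx)]

lemma ae_nonneg_expMeasure (r : ℝ) : ∀ᵐ x ∂expMeasure r, 0 ≤ x := by
  rw [expMeasure, gammaMeasure,
    ae_withDensity_iff (f := gammaPDF 1 r) (measurable_gammaPDFReal 1 r).ennreal_ofReal]
  exact ae_of_all _ fun x hx => not_lt.1 fun hneg => hx (gammaPDF_of_neg hneg)

lemma integral_pow_expMeasure {r : ℝ} (hr : 0 < r) (n : ℕ) :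
    ∫ x, x ^ n ∂expMeasure r = n ! / r ^ n := by
  have hGamma := integral_rpow_mul_exp_neg_mul_Ioi (a := n + 1) (by positivity) hr
  rw [add_sub_cancel_right, Gamma_nat_eq_factorial, ← Nat.cast_add_one] at hGamma
  simp_rw [rpow_natCast] at hGamma
  simp_rw [integral_expMeasure hr, mul_assoc, mul_comm (exp _), integral_const_mul, hGamma]
  rw [one_div, inv_pow, pow_succ]
  field_simp

lemma integrable_pow_expMeasure {r : ℝ} (hr : 0 < r) (n : ℕ) :
    Integrable (fun x : ℝ => x ^ n) (expMeasure r) :=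
  .of_integral_ne_zero (by rw [integral_pow_expMeasure hr]; positivity)

section ExponentialLaw

variable {Ω : Type*} [MeasurableSpace Ω] {P : Measure Ω} {X : Ω → ℝ} {r : ℝ}

lemma HasLaw.ae_nonneg_expMeasure (hX : HasLaw X (expMeasure r) P) : ∀ᵐ ω ∂P, 0 ≤ X ω :=
  (ae_map_iff hX.aemeasurable measurableSet_Ici).1 (hX.map_eq ▸ ProbabilityTheory.ae_nonneg_expMeasure r)

lemma HasLaw.integrable_pow_expMeasure (hX : HasLaw X (expMeasure r) P) (hr : 0 < r) (n : ℕ) :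
    Integrable (fun ω => X ω ^ n) P :=
  (integrable_map_measure (measurable_id.pow_const n).aestronglyMeasurable hX.aemeasurable).1
    (hX.map_eq ▸ ProbabilityTheory.integrable_pow_expMeasure hr n)

lemma HasLaw.integral_pow_expMeasure (hX : HasLaw X (expMeasure r) P) (hr : 0 < r) (n : ℕ) :
    ∫ ω, X ω ^ n ∂P = n ! / r ^ n :=
  (hX.integral_comp (f := fun x => x ^ n) (by fun_prop)).trans
    (ProbabilityTheory.integral_pow_expMeasure hr n)

variable {Z : Ω → ℝ} {c : ℝ}

lemma HasLaw.integrable_pow_of_abs_le (hX : HasLaw X (expMeasure r) P) (hr : 0 < r)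
    (hZ : AEStronglyMeasurable Z P) (hle : ∀ᵐ ω ∂P, |Z ω| ≤ c * X ω) (n : ℕ) :
    Integrable (fun ω => Z ω ^ n) P :=
  ((hX.integrable_pow_expMeasure hr n).const_mul (c ^ n)).mono' (hZ.pow n) <| by
    filter_upwards [hle] with ω h
    rw [norm_pow, Real.norm_eq_abs, ← mul_pow]
    exact pow_le_pow_left₀ (abs_nonneg _) h n

lemma HasLaw.integral_abs_pow_le (hX : HasLaw X (expMeasure r) P) (hr : 0 < r)
    (hZ : AEStronglyMeasurable Z P) (hle : ∀ᵐ ω ∂P, |Z ω| ≤ c * X ω) (n : ℕ) :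
    ∫ ω, |Z ω| ^ n ∂P ≤ c ^ n * (n ! / r ^ n) :=
  calc ∫ ω, |Z ω| ^ n ∂P ≤ ∫ ω, c ^ n * X ω ^ n ∂P := by
        refine integral_mono_ae ?_ ((hX.integrable_pow_expMeasure hr n).const_mul _) ?_
        · simpa only [abs_pow] using (hX.integrable_pow_of_abs_le hr hZ hle n).abs
        · filter_upwards [hle] with ω h
          rw [← mul_pow]
          exact pow_le_pow_left₀ (abs_nonneg _) h n
    _ = c ^ n * (n ! / r ^ n) := by rw [integral_const_mul, hX.integral_pow_expMeasure hr]

lemma HasLaw.summable_moment_series_of_abs_le (hX : HasLaw X (expMeasure r) P) (hr : 0 < r)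
    (hZ : AEStronglyMeasurable Z P) (hle : ∀ᵐ ω ∂P, |Z ω| ≤ c * X ω) (hc : 0 ≤ c) {t : ℝ}
    (ht : c * |t| < r) :
    Summable fun n : ℕ => |t| ^ n / n ! * ∫ ω, |Z ω| ^ n ∂P := by
  refine (summable_geometric_of_lt_one (by positivity) ((div_lt_one hr).2 ht)).of_nonneg_of_le
    (fun n => mul_nonneg (by positivity) (integral_nonneg fun ω => by positivity)) fun n => ?_
  calc |t| ^ n / n ! * ∫ ω, |Z ω| ^ n ∂P ≤ |t| ^ n / n ! * (c ^ n * (n ! / r ^ n)) := by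
        gcongr
        exact hX.integral_abs_pow_le hr hZ hle n
    _ = (c * |t| / r) ^ n := by
        rw [div_pow, mul_pow]
        field_simp

end ExponentialLaw

section MomentSeries

variable {Ω : Type*} [MeasurableSpace Ω] {P : Measure Ω} {Z : Ω → ℝ} {t : ℝ}

lemma summable_abs_moment_series
    (hsum : Summable fun n : ℕ => |t| ^ n / n ! * ∫ ω, |Z ω| ^ n ∂P) :
    Summable fun n : ℕ => |t ^ n / n ! * ∫ ω, Z ω ^ n ∂P| := by
  refine hsum.of_nonneg_of_le (fun n => abs_nonneg _) fun n => ?_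
  rw [abs_mul, abs_div, abs_pow, Nat.abs_cast]
  gcongr
  simpa only [abs_pow] using abs_integral_le_integral_abs (f := fun ω => Z ω ^ n) (μ := P)

lemma hasSum_moment_series (hint : ∀ n : ℕ, Integrable (fun ω => Z ω ^ n) P)
    (hsum : Summable fun n : ℕ => |t| ^ n / n ! * ∫ ω, |Z ω| ^ n ∂P) :
    HasSum (fun n : ℕ => t ^ n / n ! * ∫ ω, Z ω ^ n ∂P) (∫ ω, exp (t * Z ω) ∂P) := by
  have hnorm : Summable fun n : ℕ => ∫ ω, ‖t ^ n / n ! * Z ω ^ n‖ ∂P := by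
    simpa only [norm_mul, norm_div, norm_pow, Real.norm_eq_abs, Nat.abs_cast,
      integral_const_mul] using hsum
  have hexp : ∀ ω, ∑' n : ℕ, t ^ n / n ! * Z ω ^ n = exp (t * Z ω) := fun ω => by
    rw [exp_eq_exp_ℝ, ← (NormedSpace.expSeries_div_hasSum_exp (t * Z ω)).tsum_eq]
    simp_rw [mul_pow, div_mul_eq_mul_div]
  simpa only [integral_const_mul, hexp] using
    hasSum_integral_of_summable_integral_norm (fun n => (hint n).const_mul _) hnorm

end MomentSeries

end ProbabilityTheory

lemma abs_mul_sq_mul_div_le {a b Ψ x y : ℝ} (ha : 0 ≤ a) (hb : 0 ≤ b) (haΨ : 0 < a + Ψ)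
    (hx : 0 ≤ x) (hy : 0 ≤ y) : |a * b * x ^ 2 * y / (b * x * y + a + Ψ)| ≤ a * x := by
  have hbxy : 0 ≤ b * x * y := by positivity
  have hD : 0 < b * x * y + a + Ψ := by linarith
  rw [abs_of_nonneg (div_nonneg (by positivity) hD.le), div_le_iff₀ hD]
  nlinarith [mul_nonneg (mul_nonneg ha hx) haΨ.le]

theorem mgf_power_series_general
    {Ω : Type*} [MeasurableSpace Ω] (P : Measure Ω)
    (X Y : Ω → ℝ) (hX : Measurable X) (hY : Measurable Y)
    (lsr lrd : ℝ) (hlsr : 0 < lsr)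
    (hXd : Measure.map X P = expMeasure lsr⁻¹)
    (hYd : Measure.map Y P = expMeasure lrd⁻¹)
    (a b Ψ : ℝ) (ha : 0 < a) (hb : 0 < b) (hΨ : 1 ≤ Ψ)
    (γeq : Ω → ℝ)
    (hγeq : ∀ ω, γeq ω = a * b * X ω ^ 2 * Y ω / (b * X ω * Y ω + a + Ψ))
    (μ : ℕ → ℝ) (hμ : ∀ n : ℕ, μ n = ∫ ω, γeq ω ^ n ∂P)
    (s : ℝ) (hs : |s| < 1 / (a * lsr)) :
    (Summable fun n : ℕ => |((-1 : ℝ) ^ n / n.factorial) * μ n * s ^ n|) ∧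
      ∑' n : ℕ, ((-1 : ℝ) ^ n / n.factorial) * μ n * s ^ n =
        ∫ ω, Real.exp (-(s * γeq ω)) ∂P := by
  have hXlaw : HasLaw X (expMeasure lsr⁻¹) P := ⟨hX.aemeasurable, hXd⟩
  have hYlaw : HasLaw Y (expMeasure lrd⁻¹) P := ⟨hY.aemeasurable, hYd⟩
  have hγ : AEStronglyMeasurable γeq P := by
    rw [funext hγeq]
    exact Measurable.aestronglyMeasurable (by fun_prop)
  have hle : ∀ᵐ ω ∂P, |γeq ω| ≤ a * X ω := by
    filter_upwards [hXlaw.ae_nonneg_expMeasure, hYlaw.ae_nonneg_expMeasure] with ω hx hy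
    rw [hγeq]
    exact abs_mul_sq_mul_div_le ha.le hb.le (by linarith) hx hy
  have ht : a * |-s| < lsr⁻¹ := by
    rw [lt_div_iff₀ (by positivity)] at hs
    rw [abs_neg, ← one_div, lt_div_iff₀ hlsr]
    linarith
  have hsum := hXlaw.summable_moment_series_of_abs_le (inv_pos.2 hlsr) hγ hle ha.le ht
  have hterm : ∀ n : ℕ, (-1 : ℝ) ^ n / n.factorial * μ n * s ^ n =
      (-s) ^ n / n ! * ∫ ω, γeq ω ^ n ∂P := fun n => by
    rw [hμ, neg_pow]
    ring
  simp_rw [hterm, ← neg_mul]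
  exact ⟨summable_abs_moment_series hsum,
    (hasSum_moment_series (hXlaw.integrable_pow_of_abs_le (inv_pos.2 hlsr) hγ hle) hsum).tsum_eq⟩

/-- For independent exponential `X` (mean `λ_sr`) and `Y` (mean `λ_rd`), `â > 0`,
`b̂ > 0`, `Ψ ≥ 1`, `γ_eq = â·b̂·X²·Y/(b̂·X·Y + â + Ψ)`, and `μ_n = E[γ_eq^n]`: for every real
`s` with `|s| < 1/(â·λ_sr)`, the series `∑ ((−1)^n/n!)·μ_n·s^n` converges absolutely and its sum
equals `E[e^{−s·γ_eq}]`. -/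
theorem mgf_power_series
    {Ω : Type*} [MeasurableSpace Ω] (P : Measure Ω) [IsProbabilityMeasure P]
    (X Y : Ω → ℝ) (hX : Measurable X) (hY : Measurable Y)
    (hXY : IndepFun X Y P)
    (lsr lrd : ℝ) (hlsr : 0 < lsr) (hlrd : 0 < lrd)
    (hXd : Measure.map X P = expMeasure lsr⁻¹)
    (hYd : Measure.map Y P = expMeasure lrd⁻¹)
    (a b Ψ : ℝ) (ha : 0 < a) (hb : 0 < b) (hΨ : 1 ≤ Ψ)
    (γeq : Ω → ℝ)
    (hγeq : ∀ ω, γeq ω = a * b * X ω ^ 2 * Y ω / (b * X ω * Y ω + a + Ψ))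
    (μ : ℕ → ℝ) (hμ : ∀ n : ℕ, μ n = ∫ ω, γeq ω ^ n ∂P)
    (s : ℝ) (hs : |s| < 1 / (a * lsr)) :
    (Summable fun n : ℕ => |((-1 : ℝ) ^ n / n.factorial) * μ n * s ^ n|) ∧
      ∑' n : ℕ, ((-1 : ℝ) ^ n / n.factorial) * μ n * s ^ n =
        ∫ ω, Real.exp (-(s * γeq ω)) ∂P :=
  mgf_power_series_general P X Y hX hY lsr lrd hlsr hXd hYd a b Ψ ha hb hΨ γeq hγeq μ hμ s hs
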